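/- arXiv:2511.06560 — 6 statements merged into one kernel-verified Lean document; each statement's English description precedes it below -/
import Mathlib

section
/- Let X be a real Hilbert space and L : X → X a linear nonexpansive operator. Then the fixed point set of L equals the orthogonal complement of the closure of the range of Id − L, i.e., Fix L = (cl ran(Id − L))^⊥. -/
/-!
For a contraction `T` on a Hilbert space, `T` and `T†` have the same fixed points: if
`T† x = x` then `re ⟪T x, x⟫ = ‖x‖²`, so `‖T x - x‖² = ‖T x‖² - ‖x‖² ≤ 0`. Hence
`Fix L = ker (1 - L)` equals `ker (1 - L)† = (range (1 - L))ᗮ`, and an orthogonal complement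
does not see closures.
-/

namespace ContinuousLinearMap

open scoped InnerProduct

variable {𝕜 E : Type*} [RCLike 𝕜] [NormedAddCommGroup E] [InnerProductSpace 𝕜 E]
  [CompleteSpace E]

theorem apply_eq_self_of_adjoint_apply_eq_self {T : E →L[𝕜] E}
    (hT : ‖T‖ ≤ 1) {x : E} (hx : (T†) x = x) : T x = x := by
  have hre : RCLike.re (inner 𝕜 (T x) x) = ‖x‖ ^ 2 := by
    rw [← adjoint_inner_right, hx, inner_self_eq_norm_sq (𝕜 := 𝕜)]
  have hTx : ‖T x‖ ≤ ‖x‖ := T.le_of_opNorm_le hT x |>.trans_eq (one_mul _)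
  have : ‖T x - x‖ ^ 2 ≤ 0 := by
    rw [norm_sub_sq (𝕜 := 𝕜), hre]
    nlinarith [norm_nonneg (T x)]
  rw [← sub_eq_zero, ← norm_eq_zero]
  exact pow_eq_zero_iff two_ne_zero |>.mp (le_antisymm this (by positivity))

theorem adjoint_apply_eq_self_iff {T : E →L[𝕜] E} (hT : ‖T‖ ≤ 1)
    {x : E} : (T†) x = x ↔ T x = x := by
  refine ⟨T.apply_eq_self_of_adjoint_apply_eq_self hT, fun hx ↦ ?_⟩
  refine (T†).apply_eq_self_of_adjoint_apply_eq_self ?_ (by rwa [adjoint_adjoint])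
  rwa [LinearIsometryEquiv.norm_map]

theorem ker_adjoint_id_sub {T : E →L[𝕜] E} (hT : ‖T‖ ≤ 1) :
    (ContinuousLinearMap.id 𝕜 E - T)†.ker = (ContinuousLinearMap.id 𝕜 E - T).ker := by
  ext x
  simp only [LinearMap.mem_ker, coe_coe, map_sub, adjoint_id, sub_apply, id_apply, sub_eq_zero,
    eq_comm (a := x), T.adjoint_apply_eq_self_iff hT]

end ContinuousLinearMap

theorem stmt_1 {X : Type*} [NormedAddCommGroup X] [InnerProductSpace ℝ X]
    [CompleteSpace X] (L : X →L[ℝ] X) (hL : ∀ x : X, ‖L x‖ ≤ ‖x‖) :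
    {x : X | L x = x} =
      ((LinearMap.range ((ContinuousLinearMap.id ℝ X - L : X →L[ℝ] X) :
          X →ₗ[ℝ] X)).topologicalClosureᗮ : Set X) := by
  have hL' : ‖L‖ ≤ 1 := L.opNorm_le_bound zero_le_one (by simpa using hL)
  rw [Submodule.orthogonal_closure, ContinuousLinearMap.orthogonal_range,
    ContinuousLinearMap.ker_adjoint_id_sub hL']
  ext x
  simp [sub_eq_zero, eq_comm (a := x)]
end

section
/- In the setting of the inertial iteration x_{k+1} = T(x_k + r_k), r_{k+1} = α_k(x_{k+1} − x_k) with r_0 = 0 and T x = L x + q affine with Fix T ≠ ∅, the sequence (r_k) lies in ran(Id − L), and so does the sequence s_k := Σ_{n=1}^{k} L^n r_{k−n}. -/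
/-! The residual `q = p - L p` of a fixed point `p` of `T` lies in `ran(Id - L)`, and the
increments `x_{k+1} - x_k = L r_k + q - (Id - L) x_k` stay in this subspace as long as `r_k`
does. The subspace is invariant under every power of `L`, since `L` commutes with `Id - L`,
so `r_k` and the sums `s_k` lie in it by induction and closure under addition. -/

open LinearMap

namespace Module.End

variable {R M : Type*} [Ring R] [AddCommGroup M] [Module R M]

theorem apply_mem_range_of_commute {f g : End R M} (h : Commute g f) {v : M}
    (hv : v ∈ range f) : g v ∈ range f := by
  obtain ⟨z, rfl⟩ := hv
  exact ⟨g z, (LinearMap.congr_fun h.eq z).symm⟩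

theorem pow_apply_mem_range_one_sub (L : End R M) (n : ℕ) {v : M} (hv : v ∈ range (1 - L)) :
    (L ^ n) v ∈ range (1 - L) :=
  apply_mem_range_of_commute (((Commute.one_right L).sub_right (Commute.refl L)).pow_left n) hv

theorem mem_range_one_sub_of_add_eq {L : End R M} {p q : M} (hp : L p + q = p) :
    q ∈ range (1 - L) :=
  ⟨p, by rw [LinearMap.sub_apply, one_apply, sub_eq_iff_eq_add', hp]⟩

theorem apply_add_add_sub_mem_range_one_sub {L : End R M} {q x r : M}
    (hq : q ∈ range (1 - L)) (hr : r ∈ range (1 - L)) :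
    L (x + r) + q - x ∈ range (1 - L) := by
  have hx : (1 - L) x ∈ range (1 - L) := mem_range_self _ x
  have hLr : L r ∈ range (1 - L) := by simpa using pow_apply_mem_range_one_sub L 1 hr
  convert Submodule.sub_mem _ (Submodule.add_mem _ hLr hq) hx using 1
  simp only [map_add, LinearMap.sub_apply, one_apply]
  abel

theorem inertial_mem_range_one_sub {L : End R M} {q : M} (hq : q ∈ range (1 - L))
    (α : ℕ → R) {x r : ℕ → M} (hr0 : r 0 = 0) (hx : ∀ k, x (k + 1) = L (x k + r k) + q)
    (hr : ∀ k, r (k + 1) = α k • (x (k + 1) - x k)) (k : ℕ) :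
    r k ∈ range (1 - L) := by
  induction k with
  | zero => exact hr0 ▸ Submodule.zero_mem _
  | succ k ih =>
    rw [hr k, hx k]
    exact Submodule.smul_mem _ _ (apply_add_add_sub_mem_range_one_sub hq ih)

end Module.End

open Module.End in
theorem stmt_10_general {X : Type*} [NormedAddCommGroup X] [InnerProductSpace ℝ X]
    (L : X →L[ℝ] X)
    (q : X) (T : X → X) (hT : ∀ x, T x = L x + q) (hfix : ∃ x : X, T x = x)
    (α : ℕ → ℝ) (x r : ℕ → X) (hr0 : r 0 = 0)
    (hx : ∀ k, x (k + 1) = T (x k + r k))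
    (hr : ∀ k, r (k + 1) = α k • (x (k + 1) - x k)) :
    (∀ k, r k ∈ Set.range (fun z : X => z - L z)) ∧
    (∀ k, (∑ n ∈ Finset.Icc 1 k, (L ^ n) (r (k - n))) ∈
        Set.range (fun z : X => z - L z)) := by
  have hS : Set.range (fun z : X => z - L z) = range (1 - (L : X →ₗ[ℝ] X)) := rfl
  obtain ⟨p, hp⟩ := hfix
  have hq := mem_range_one_sub_of_add_eq (L := (L : X →ₗ[ℝ] X)) ((hT p).symm.trans hp)
  have hrS := inertial_mem_range_one_sub hq α hr0 (fun k => (hx k).trans (hT _)) hr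
  rw [hS]
  refine ⟨hrS, fun k => Submodule.sum_mem _ fun n _ => ?_⟩
  rw [← ContinuousLinearMap.coe_coe, ContinuousLinearMap.toLinearMap_pow]
  exact pow_apply_mem_range_one_sub _ n (hrS _)

theorem stmt_10 {X : Type*} [NormedAddCommGroup X] [InnerProductSpace ℝ X]
    [CompleteSpace X] (L : X →L[ℝ] X) (hL : ∀ x : X, ‖L x‖ ≤ ‖x‖)
    (q : X) (T : X → X) (hT : ∀ x, T x = L x + q) (hfix : ∃ x : X, T x = x)
    (α : ℕ → ℝ) (x r : ℕ → X) (hr0 : r 0 = 0)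
    (hx : ∀ k, x (k + 1) = T (x k + r k))
    (hr : ∀ k, r (k + 1) = α k • (x (k + 1) - x k)) :
    (∀ k, r k ∈ Set.range (fun z : X => z - L z)) ∧
    (∀ k, (∑ n ∈ Finset.Icc 1 k, (L ^ n) (r (k - n))) ∈
        Set.range (fun z : X => z - L z)) :=
  stmt_10_general L q T hT hfix α x r hr0 hx hr
end

section
/- In the setting of the inertial affine iteration with Fix T ≠ ∅, the metric projection onto Fix T of the iterate x_k equals the projection of the plain Picard iterate: P_{Fix T} x_k = P_{Fix T}(T^k x_0) for all k ∈ ℕ. -/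
/-!
Fixed points of a contraction `L` on a Hilbert space are also fixed by its adjoint, so for every
`v ∈ Fix L` the functional `⟪v, ·⟫` is `L`-invariant; since `q = z₀ - L z₀` for a fixed point `z₀`
of `T`, it is `T`-invariant as well. The inertial iteration only adds multiples of increments
`x (k + 1) - x k` along which these functionals vanish, so `x k - T^[k] (x 0)` is orthogonal to
`Fix L`, the direction space of `Fix T`. Points whose difference is orthogonal to the direction of an
affine subspace have the same nearest point in it.
-/

open scoped InnerProductSpace RealInnerProductSpace

namespace ContinuousLinearMap

variable {𝕜 E : Type*} [RCLike 𝕜] [NormedAddCommGroup E] [InnerProductSpace 𝕜 E] [CompleteSpace E]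
  {L : E →L[𝕜] E}

theorem adjoint_apply_eq_self_of_apply_eq_self (hL : ‖L‖ ≤ 1) {v : E} (hv : L v = v) :
    adjoint L v = v := by
  refine eq_of_norm_le_re_inner_eq_norm_sq (𝕜 := 𝕜) ?_ ?_
  · simpa using (adjoint L).le_of_opNorm_le ((adjoint.norm_map L).trans_le hL) v
  · rw [adjoint_inner_left, hv, inner_self_eq_norm_sq]

theorem inner_apply_eq_of_apply_eq_self (hL : ‖L‖ ≤ 1) {v : E} (hv : L v = v) (u : E) :
    ⟪v, L u⟫_𝕜 = ⟪v, u⟫_𝕜 := by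
  rw [← adjoint_inner_left, adjoint_apply_eq_self_of_apply_eq_self hL hv]

end ContinuousLinearMap

theorem inner_apply_add_eq_of_apply_eq_self {X : Type*} [NormedAddCommGroup X]
    [InnerProductSpace ℝ X] [CompleteSpace X] {L : X →L[ℝ] X} (hL : ‖L‖ ≤ 1) {q z₀ : X}
    (hz₀ : L z₀ + q = z₀) {v : X} (hv : L v = v) (u : X) : ⟪v, L u + q⟫ = ⟪v, u⟫ := by
  have hq : q = z₀ - L z₀ := eq_sub_of_add_eq' hz₀
  rw [hq, inner_add_right, inner_sub_right, L.inner_apply_eq_of_apply_eq_self hL hv,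
    L.inner_apply_eq_of_apply_eq_self hL hv, sub_self, add_zero]

theorem apply_sub_eq_self_of_add_eq_self {M F : Type*} [AddCommGroup M] [FunLike F M M]
    [AddMonoidHomClass F M M] {f : F} {q z w : M} (hz : f z + q = z) (hw : f w + q = w) :
    f (w - z) = w - z := by
  rw [map_sub, eq_sub_of_add_eq hz, eq_sub_of_add_eq hw, sub_sub_sub_cancel_right]

theorem LinearMap.apply_inertial_eq {R X M : Type*} [Ring R] [AddCommGroup X] [Module R X]
    [AddCommGroup M] [Module R M] (φ : X →ₗ[R] M) {T : X → X} (hT : ∀ u, φ (T u) = φ u)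
    (α : ℕ → R) {x r : ℕ → X} (hr0 : r 0 = 0) (hx : ∀ k, x (k + 1) = T (x k + r k))
    (hr : ∀ k, r (k + 1) = α k • (x (k + 1) - x k)) (k : ℕ) :
    φ (r k) = 0 ∧ φ (x k) = φ (x 0) := by
  induction k with
  | zero => simp [hr0]
  | succ k ih =>
    have hstep : φ (x (k + 1)) = φ (x k) := by rw [hx, hT, map_add, ih.1, add_zero]
    refine ⟨?_, hstep.trans ih.2⟩
    rw [hr, map_smul, map_sub, hstep, sub_self, smul_zero]

theorem norm_sub_le_norm_sub_iff_of_inner_eq_zero {X : Type*} [NormedAddCommGroup X]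
    [InnerProductSpace ℝ X] {a b z w : X} (h : ⟪w - z, a - b⟫ = 0) :
    ‖a - z‖ ≤ ‖a - w‖ ↔ ‖b - z‖ ≤ ‖b - w‖ := by
  have hsq : ‖a - z‖ ^ 2 - ‖a - w‖ ^ 2 = ‖b - z‖ ^ 2 - ‖b - w‖ ^ 2 := by
    rw [show a - z = (b - z) + (a - b) by abel, show a - w = (b - w) + (a - b) by abel,
      norm_add_sq_real, norm_add_sq_real]
    have : ⟪b - z, a - b⟫ - ⟪b - w, a - b⟫ = ⟪w - z, a - b⟫ := by
      rw [← inner_sub_left, sub_sub_sub_cancel_left]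
    linarith
  rw [← sq_le_sq₀ (norm_nonneg _) (norm_nonneg _), ← sq_le_sq₀ (norm_nonneg _) (norm_nonneg _)]
  constructor <;> intro <;> linarith

theorem stmt_11 {X : Type*} [NormedAddCommGroup X] [InnerProductSpace ℝ X]
    [CompleteSpace X] (L : X →L[ℝ] X) (hL : ∀ x : X, ‖L x‖ ≤ ‖x‖)
    (q : X) (T : X → X) (hT : ∀ x, T x = L x + q) (hfix : ∃ x : X, T x = x)
    (α : ℕ → ℝ) (x r : ℕ → X) (hr0 : r 0 = 0)
    (hx : ∀ k, x (k + 1) = T (x k + r k))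
    (hr : ∀ k, r (k + 1) = α k • (x (k + 1) - x k)) :
    ∀ k, ∀ z : X,
      ((T z = z ∧ ∀ w : X, T w = w → ‖x k - z‖ ≤ ‖x k - w‖) ↔
       (T z = z ∧ ∀ w : X, T w = w → ‖T^[k] (x 0) - z‖ ≤ ‖T^[k] (x 0) - w‖)) := by
  intro k z
  obtain ⟨z₀, hz₀⟩ := hfix
  have hLnorm : ‖L‖ ≤ 1 := L.opNorm_le_bound zero_le_one (by simpa using hL)
  have hinv : ∀ v, L v = v → ∀ u, innerₗ X v (T u) = innerₗ X v u := fun v hv u => by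
    simpa [hT] using inner_apply_add_eq_of_apply_eq_self hLnorm ((hT z₀).symm.trans hz₀) hv u
  have horth : T z = z → ∀ w, T w = w → ⟪w - z, x k - T^[k] (x 0)⟫ = 0 := fun hz w hw => by
    have hv := apply_sub_eq_self_of_add_eq_self ((hT z).symm.trans hz) ((hT w).symm.trans hw)
    have hxk := ((innerₗ X (w - z)).apply_inertial_eq (hinv _ hv) α hr0 hx hr k).2
    have hyk := congrFun (Function.iterate_invariant (funext (hinv _ hv)) k) (x 0)
    simp only [innerₗ_apply_apply, Function.comp_apply] at hxk hyk
    rw [inner_sub_right, hxk, hyk, sub_self]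
  exact and_congr_right fun hz => forall₂_congr fun w hw =>
    norm_sub_le_norm_sub_iff_of_inner_eq_zero (horth hz w hw)
end

section
/- Let X, Y be real Hilbert spaces, U a closed linear subspace of X, A : X → Y bounded linear with closed range, and suppose U + ker A is closed. Then there exists C ≥ 0 such that for every x ∈ U, dist(x, ker A ∩ U) ≤ C ‖A x‖. -/
/-!
Let `W = U + ker A`. On the Banach space `ran A` the corestriction of `A` is a surjection, hence
an open quotient map by the open mapping theorem; since `W` is closed and saturated for `ker A`,
its image `A W = A U` is closed. So `A` restricted to the Banach space `U` has closed range, and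
the open mapping theorem for `U → A U` gives every `A x` a preimage `u ∈ U` with
`‖u‖ ≤ C ‖A x‖`; then `x - u ∈ ker A ∩ U` is within `C ‖A x‖` of `x`.
-/

open Pointwise Set

namespace ContinuousLinearMap

variable {𝕜 E F : Type*} [NontriviallyNormedField 𝕜]
  [NormedAddCommGroup E] [NormedSpace 𝕜 E] [NormedAddCommGroup F] [NormedSpace 𝕜 F]

theorem surjective_rangeRestrict (A : E →L[𝕜] F) : Function.Surjective A.rangeRestrict :=
  (A : E →ₗ[𝕜] F).surjective_rangeRestrict

theorem completeSpace_range [CompleteSpace F] {A : E →L[𝕜] F} (hran : IsClosed (range A)) :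
    CompleteSpace (LinearMap.range (A : E →ₗ[𝕜] F)) :=
  (show IsClosed (LinearMap.range (A : E →ₗ[𝕜] F) : Set F) from hran).completeSpace_coe

variable [CompleteSpace E] [CompleteSpace F]

theorem isClosed_map_of_ker_le (A : E →L[𝕜] F) (hran : IsClosed (range A))
    {W : Submodule 𝕜 E} (hW : IsClosed (W : Set E)) (hker : LinearMap.ker (A : E →ₗ[𝕜] F) ≤ W) :
    IsClosed (W.map (A : E →ₗ[𝕜] F) : Set F) := by
  have := completeSpace_range hran
  have hsat : A.rangeRestrict ⁻¹' (A.rangeRestrict '' W) = W :=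
    congrArg SetLike.coe <| Submodule.comap_map_eq_self (p := W)
      (f := (A.rangeRestrict : E →ₗ[𝕜] LinearMap.range (A : E →ₗ[𝕜] F)))
      (by rwa [ker_codRestrict])
  have himage : IsClosed (A.rangeRestrict '' W) :=
    (A.rangeRestrict.isQuotientMap A.surjective_rangeRestrict).isClosed_preimage.mp
      (by rwa [hsat])
  have : (W.map (A : E →ₗ[𝕜] F) : Set F) = (↑) '' (A.rangeRestrict '' W) := by
    rw [Submodule.map_coe, image_image]; rfl
  rw [this]
  exact hran.isClosedEmbedding_subtypeVal.isClosedMap _ himage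

theorem exists_preimage_norm_le_of_isClosed_range (A : E →L[𝕜] F) (hran : IsClosed (range A)) :
    ∃ C > 0, ∀ x, ∃ u, A u = A x ∧ ‖u‖ ≤ C * ‖A x‖ := by
  have := completeSpace_range hran
  obtain ⟨C, hC, hpre⟩ := A.rangeRestrict.exists_preimage_norm_le A.surjective_rangeRestrict
  refine ⟨C, hC, fun x => ?_⟩
  obtain ⟨u, hu, hun⟩ := hpre (A.rangeRestrict x)
  exact ⟨u, congrArg Subtype.val hu, hun⟩

end ContinuousLinearMap

theorem Submodule.map_sup_ker {R M N : Type*} [Ring R] [AddCommGroup M] [Module R M]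
    [AddCommGroup N] [Module R N] (f : M →ₗ[R] N) (p : Submodule R M) :
    (p ⊔ LinearMap.ker f).map f = p.map f := by
  rw [Submodule.map_sup, sup_eq_left, Submodule.map_le_iff_le_comap]
  exact LinearMap.ker_le_comap f

theorem stmt_13 {X Y : Type*} [NormedAddCommGroup X] [InnerProductSpace ℝ X]
    [CompleteSpace X] [NormedAddCommGroup Y] [InnerProductSpace ℝ Y]
    [CompleteSpace Y] (U : Submodule ℝ X) (hU : IsClosed (U : Set X))
    (A : X →L[ℝ] Y) (hran : IsClosed (Set.range A))
    (hsum : IsClosed ((U : Set X) + (LinearMap.ker (A : X →ₗ[ℝ] Y) : Set X))) :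
    ∃ C : ℝ, 0 ≤ C ∧ ∀ x ∈ U,
      Metric.infDist x ((LinearMap.ker (A : X →ₗ[ℝ] Y) : Set X) ∩ (U : Set X)) ≤ C * ‖A x‖ := by
  have : CompleteSpace U := hU.completeSpace_coe
  set B : U →L[ℝ] Y := A ∘L U.subtypeL
  have hB : IsClosed (range B) := by
    have hrange : range B = ((U ⊔ LinearMap.ker (A : X →ₗ[ℝ] Y)).map (A : X →ₗ[ℝ] Y) : Set Y) := by
      rw [Submodule.map_sup_ker, Submodule.map_coe]
      ext; simp [B]
    rw [hrange]
    exact A.isClosed_map_of_ker_le hran (by rwa [Submodule.coe_sup]) le_sup_right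
  obtain ⟨C, hC, hpre⟩ := B.exists_preimage_norm_le_of_isClosed_range hB
  refine ⟨C, hC.le, fun x hx => ?_⟩
  obtain ⟨u, hu, hun⟩ := hpre ⟨x, hx⟩
  have hmem : x - u ∈ (LinearMap.ker (A : X →ₗ[ℝ] Y) : Set X) ∩ (U : Set X) :=
    ⟨by simpa [B, sub_eq_zero] using hu.symm, U.sub_mem hx u.2⟩
  calc Metric.infDist x _ ≤ dist x (x - u) := Metric.infDist_le_dist_of_mem hmem
    _ = ‖u‖ := by simp
    _ ≤ C * ‖A x‖ := hun
end

section
/- Let U and V be closed affine subspaces of a real Hilbert space X. Then U + V is closed if and only if par U + par V is closed, where par U := U − U and par V := V − V are the parallel (direction) subspaces. -/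
open Pointwise

namespace AffineSubspace

variable {k V : Type*} [Ring k] [AddCommGroup V] [Module k V]

theorem coe_eq_vadd_coe_direction {s : AffineSubspace k V} {p : V} (hp : p ∈ s) :
    (s : Set V) = p +ᵥ (s.direction : Set V) := by
  ext x
  rw [Set.mem_vadd_set_iff_neg_vadd_mem, vadd_eq_add, neg_add_eq_sub, SetLike.mem_coe,
    SetLike.mem_coe, ← vsub_eq_sub, vsub_right_mem_direction_iff_mem hp]

theorem coe_add_coe_eq_vadd_direction {s t : AffineSubspace k V} {p q : V} (hp : p ∈ s)
    (hq : q ∈ t) :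
    (s : Set V) + t = (p + q) +ᵥ ((s.direction : Set V) + t.direction) := by
  rw [coe_eq_vadd_coe_direction hp, coe_eq_vadd_coe_direction hq]
  exact vadd_add_vadd p _ q _

end AffineSubspace

theorem stmt_15_general {X : Type*} [NormedAddCommGroup X] [InnerProductSpace ℝ X]
    (U V : AffineSubspace ℝ X)
    (hUne : (U : Set X).Nonempty) (hVne : (V : Set X).Nonempty) :
    IsClosed ((U : Set X) + (V : Set X)) ↔
      IsClosed ((U.direction : Set X) + (V.direction : Set X)) := by
  obtain ⟨u, hu⟩ := hUne
  obtain ⟨v, hv⟩ := hVne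
  rw [AffineSubspace.coe_add_coe_eq_vadd_direction hu hv]
  exact (Homeomorph.addLeft (u + v)).isClosed_image

theorem stmt_15 {X : Type*} [NormedAddCommGroup X] [InnerProductSpace ℝ X]
    [CompleteSpace X] (U V : AffineSubspace ℝ X)
    (hUne : (U : Set X).Nonempty) (hVne : (V : Set X).Nonempty)
    (hUcl : IsClosed (U : Set X)) (hVcl : IsClosed (V : Set X)) :
    IsClosed ((U : Set X) + (V : Set X)) ↔
      IsClosed ((U.direction : Set X) + (V.direction : Set X)) :=
  stmt_15_general U V hUne hVne
end

section
/- Let X be a real Hilbert space, Y a real Hilbert space, A : X → Y bounded linear, b ∈ Y, U a closed affine subspace of X, and set f(x) = ½‖Ax − b‖², F = f + ι_U, S = Argmin F. If S ≠ ∅ then par S := S − S = ker A ∩ par U. -/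
/-!
Two minimisers `u`, `v` of `x ↦ ‖A x - b‖` over a convex set have residuals `A u - b`, `A v - b` of
the same norm; if they differed, strict convexity of the norm would make the residual of the midpoint
strictly shorter. Hence `A u = A v`, giving `S - S ⊆ ker A ∩ par U`. Conversely, translating a
minimiser by an element of `ker A ∩ par U` stays in `U` and leaves the residual unchanged.
-/

theorem map_eq_of_forall_norm_sub_le {E F : Type*} [AddCommGroup E] [Module ℝ E]
    [NormedAddCommGroup F] [NormedSpace ℝ F] [StrictConvexSpace ℝ F] (A : E →ₗ[ℝ] F) (b : F)
    {C : Set E} (hC : Convex ℝ C) {u v : E} (hu : u ∈ C) (hv : v ∈ C)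
    (hu_min : ∀ y ∈ C, ‖A u - b‖ ≤ ‖A y - b‖) (hv_min : ∀ y ∈ C, ‖A v - b‖ ≤ ‖A y - b‖) :
    A u = A v := by
  have hmid : (1 / 2 : ℝ) • u + (1 / 2 : ℝ) • v ∈ C :=
    hC hu hv (by norm_num) (by norm_num) (by norm_num)
  have hnorm : ‖A u - b‖ = ‖A v - b‖ := le_antisymm (hu_min v hv) (hv_min u hu)
  have hres : A ((1 / 2 : ℝ) • u + (1 / 2 : ℝ) • v) - b =
      (1 / 2 : ℝ) • ((A u - b) + (A v - b)) := by
    simp only [map_add, map_smul]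
    module
  have hres_eq : A u - b = A v - b := by
    by_contra hne
    exact (hu_min _ hmid).not_gt (hres ▸ (norm_midpoint_lt_iff hnorm).2 hne)
  exact sub_left_injective hres_eq

theorem stmt_16_general {X Y : Type*} [NormedAddCommGroup X] [InnerProductSpace ℝ X]
    [NormedAddCommGroup Y] [InnerProductSpace ℝ Y]
    (A : X →L[ℝ] Y) (b : Y)
    (U : AffineSubspace ℝ X)
    (f : X → ℝ) (hf : ∀ x, f x = (1 / 2) * ‖A x - b‖ ^ 2)
    (S : Set X) (hS : S = {x | x ∈ U ∧ ∀ y ∈ U, f x ≤ f y})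
    (hSne : S.Nonempty) :
    {z : X | ∃ u ∈ S, ∃ v ∈ S, z = u - v} =
      (LinearMap.ker (A : X →ₗ[ℝ] Y) : Set X) ∩ (U.direction : Set X) := by
  have hf_le : ∀ x y, f x ≤ f y ↔ ‖A x - b‖ ≤ ‖A y - b‖ := fun x y => by
    rw [hf, hf, mul_le_mul_iff_right₀ (by norm_num : (0 : ℝ) < 1 / 2),
      pow_le_pow_iff_left₀ (norm_nonneg _) (norm_nonneg _) two_ne_zero]
  subst hS
  ext z
  simp only [Set.mem_ofPred_eq, Set.mem_inter_iff, SetLike.mem_coe, LinearMap.mem_ker,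
    ContinuousLinearMap.coe_coe]
  constructor
  · rintro ⟨u, ⟨huU, hu_min⟩, v, ⟨hvU, hv_min⟩, rfl⟩
    have hAuv : A u = A v := map_eq_of_forall_norm_sub_le (A : X →ₗ[ℝ] Y) b U.convex huU hvU
      (fun y hy => (hf_le u y).1 (hu_min y hy)) (fun y hy => (hf_le v y).1 (hv_min y hy))
    exact ⟨by rw [map_sub, hAuv, sub_self], U.vsub_mem_direction huU hvU⟩
  · rintro ⟨hAz, hz⟩
    obtain ⟨u, huU, hu_min⟩ := hSne
    have huzU : u - z ∈ U := by
      simpa [vadd_eq_add, sub_eq_neg_add] using U.vadd_mem_of_mem_direction (neg_mem hz) huU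
    have hfuz : f (u - z) = f u := by rw [hf, hf, map_sub, hAz, sub_zero]
    exact ⟨u, ⟨huU, hu_min⟩, u - z, ⟨huzU, fun y hy => hfuz ▸ hu_min y hy⟩, by abel⟩

theorem stmt_16 {X Y : Type*} [NormedAddCommGroup X] [InnerProductSpace ℝ X]
    [CompleteSpace X] [NormedAddCommGroup Y] [InnerProductSpace ℝ Y]
    [CompleteSpace Y] (A : X →L[ℝ] Y) (b : Y)
    (U : AffineSubspace ℝ X) (hUne : (U : Set X).Nonempty)
    (hUcl : IsClosed (U : Set X))
    (f : X → ℝ) (hf : ∀ x, f x = (1 / 2) * ‖A x - b‖ ^ 2)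
    (S : Set X) (hS : S = {x | x ∈ U ∧ ∀ y ∈ U, f x ≤ f y})
    (hSne : S.Nonempty) :
    {z : X | ∃ u ∈ S, ∃ v ∈ S, z = u - v} =
      (LinearMap.ker (A : X →ₗ[ℝ] Y) : Set X) ∩ (U.direction : Set X) :=
  stmt_16_general A b U f hf S hS hSne
end
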